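/- arXiv:0706.1363 — 6 statements merged into one kernel-verified Lean document; each statement's English description precedes it below -/
import Mathlib

section
/- Let l and r be positive integers. If (6l−2)⁴ · r⁵ = (6r−2)⁴ · l⁵, then l = r. Equivalently, the function h(x) = (6x−2)⁴ / x⁵ takes pairwise distinct values on the positive integers. -/
/-- Step inequality: h(n) > h(n+1) for integers n ≥ 2, cross-multiplied. -/
lemma h_step (n : ℤ) (hn : 2 ≤ n) :
    (6 * (n + 1) - 2) ^ 4 * n ^ 5 < (6 * n - 2) ^ 4 * (n + 1) ^ 5 := by
  nlinarith [pow_pos (by linarith : (0:ℤ) < n) 2, pow_pos (by linarith : (0:ℤ) < n) 3,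
    sq_nonneg (n - 2), mul_pos (pow_pos (by linarith : (0:ℤ) < n) 3) (by linarith : (0:ℤ) < n - 1),
    pow_pos (by linarith : (0:ℤ) < n) 5, pow_pos (by linarith : (0:ℤ) < n) 6]

/-- h strictly decreasing on integers ≥ 2, cross-multiplied. -/
lemma h_anti (a : ℤ) (ha : 2 ≤ a) : ∀ b : ℤ, a + 1 ≤ b →
    (6 * b - 2) ^ 4 * a ^ 5 < (6 * a - 2) ^ 4 * b ^ 5 := by
  refine Int.le_induction ?_ ?_
  · simpa using h_step a ha
  · intro b hb ih
    have hb2 : (2:ℤ) ≤ b := by linarith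
    have h2 := h_step b hb2
    have hb5 : (0:ℤ) < b ^ 5 := by positivity
    have hb4 : (0:ℤ) < (6 * b - 2) ^ 4 := by
      have : (0:ℤ) < 6 * b - 2 := by linarith
      positivity
    have ha5 : (0:ℤ) < a ^ 5 := by positivity
    have ha4 : (0:ℤ) < (6 * a - 2) ^ 4 := by
      have : (0:ℤ) < 6 * a - 2 := by linarith
      positivity
    have key : ((6 * (b + 1) - 2) ^ 4 * a ^ 5) * ((6 * b - 2) ^ 4 * b ^ 5)
        < ((6 * a - 2) ^ 4 * (b + 1) ^ 5) * ((6 * b - 2) ^ 4 * b ^ 5) := by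
      calc ((6 * (b + 1) - 2) ^ 4 * a ^ 5) * ((6 * b - 2) ^ 4 * b ^ 5)
          = ((6 * (b + 1) - 2) ^ 4 * b ^ 5) * ((6 * b - 2) ^ 4 * a ^ 5) := by ring
        _ < ((6 * b - 2) ^ 4 * (b + 1) ^ 5) * ((6 * a - 2) ^ 4 * b ^ 5) := by
            have hpos1 : (0:ℤ) < (6 * b - 2) ^ 4 * (b + 1) ^ 5 := by
              have : (0:ℤ) < (b + 1) ^ 5 := by positivity
              positivity
            have hpos2 : (0:ℤ) ≤ (6 * (b + 1) - 2) ^ 4 * b ^ 5 := by positivity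
            exact mul_lt_mul' (le_of_lt h2) ih (by positivity) hpos1
        _ = ((6 * a - 2) ^ 4 * (b + 1) ^ 5) * ((6 * b - 2) ^ 4 * b ^ 5) := by ring
    exact lt_of_mul_lt_mul_right key (by positivity)

/-- h(1) > h(r) for r ≥ 4. -/
lemma h_one (r : ℤ) (hr : 4 ≤ r) : (6 * r - 2) ^ 4 < 256 * r ^ 5 := by
  nlinarith [pow_pos (by linarith : (0:ℤ) < r) 3, pow_pos (by linarith : (0:ℤ) < r) 4,
    sq_nonneg (r - 4), mul_pos (pow_pos (by linarith : (0:ℤ) < r) 3) (by linarith : (0:ℤ) < r - 3)]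

lemma key_asym (l r : ℕ) (hl : 0 < l) (hlr : l < r)
    (h : (6 * (l : ℤ) - 2) ^ 4 * (r : ℤ) ^ 5 = (6 * (r : ℤ) - 2) ^ 4 * (l : ℤ) ^ 5) : False := by
  rcases Nat.lt_or_ge l 2 with h1 | h2
  · -- l = 1
    have hl1 : l = 1 := by omega
    subst hl1
    rcases Nat.lt_or_ge r 4 with h4 | h4
    · interval_cases r <;> norm_num at h
    · have h5 := h_one (r:ℤ) (by exact_mod_cast h4)
      push_cast at h
      norm_num at h
      omega
  · have ha := h_anti (l:ℤ) (by exact_mod_cast h2) (r:ℤ)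
      (by have hc : (l:ℤ) < r := by exact_mod_cast hlr
          omega)
    omega

/-- If `l` and `r` are positive integers with `(6l-2)^4 * r^5 = (6r-2)^4 * l^5`,
then `l = r`; equivalently `h(x) = (6x-2)^4 / x^5` takes pairwise distinct values on
the positive integers. -/
theorem h_injective_on_positive_integers (l r : ℕ) (hl : 0 < l) (hr : 0 < r)
    (h : (6 * (l : ℤ) - 2) ^ 4 * (r : ℤ) ^ 5 = (6 * (r : ℤ) - 2) ^ 4 * (l : ℤ) ^ 5) :
    l = r := by
  rcases lt_trichotomy l r with hlt | heq | hgt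
  · exact absurd h (fun h => key_asym l r hl hlt h)
  · exact heq
  · exact absurd h.symm (fun h' => key_asym r l hr hgt h')
end

section
/- Let l and r be positive integers and let g : A_l → A_r be an isomorphism of ℚ-algebras. Write g(ā) = α₁·b̄ + β₁·ȳ and g(x̄) = α₂·b̄ + β₂·ȳ, where ā, x̄ denote the residue classes of a, x in A_l and b̄, ȳ denote the residue classes of a, x in A_r, and α₁, β₁, α₂, β₂ ∈ ℚ (assuming g maps the span of ā, x̄ into the span of b̄, ȳ). Then β₁ = 0 and α₂ = 0; that is, g(ā) is a scalar multiple of b̄ and g(x̄) is a scalar multiple of ȳ. -/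
open MvPolynomial

/-- The ideal `(a⁶, a²x, l²a⁴ + (6l−2)ax³ + lx⁴)` in `ℚ[a,x]`, where `a = X 0` and
`x = X 1`. -/
noncomputable def blowUpIdeal (l : ℕ) : Ideal (MvPolynomial (Fin 2) ℚ) :=
  Ideal.span
    { X 0 ^ 6, X 0 ^ 2 * X 1,
      C ((l : ℚ) ^ 2) * X 0 ^ 4 + C (6 * (l : ℚ) - 2) * X 0 * X 1 ^ 3 + C (l : ℚ) * X 1 ^ 4 }

/-- `A_l = ℚ[a,x] / (a⁶, a²x, l²a⁴ + (6l−2)ax³ + lx⁴)`, the cohomology algebra of the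
blow-up of `ℂP(5)` along the symplectic embedding `f_l : ℂP(1) → ℂP(5)`. -/
noncomputable abbrev BlowUpAlg (l : ℕ) : Type :=
  MvPolynomial (Fin 2) ℚ ⧸ blowUpIdeal l

/-- The residue class of `a` in `A_l`. -/
noncomputable def aBar (l : ℕ) : BlowUpAlg l := Ideal.Quotient.mk (blowUpIdeal l) (X 0)

/-- The residue class of `x` in `A_l`. -/
noncomputable def xBar (l : ℕ) : BlowUpAlg l := Ideal.Quotient.mk (blowUpIdeal l) (X 1)

/-!
Applying `g` to `a²x = 0` gives `(α₁b + β₁y)²(α₂b + β₂y) = 0` in `A_r`. The homomorphisms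
`A_r → ℚ[t]/(t⁸)` sending `(a, x)` to `(t², 0)`, resp. `(0, t²)`, turn this into `α₁²α₂ t⁶ = 0`
and `β₁²β₂ t⁶ = 0`. On the other hand `a x² ≠ 0` in `A_l`, so `g(a) g(x)² ≠ 0`. This excludes
`β₁ ≠ 0`, which would force `β₂ = 0` and `g(a) g(x)² = α₁α₂² b³ = 0`, and then `α₂ ≠ 0`, which
would force `α₁ = 0`, i.e. `g(a) = 0`.
-/

open Polynomial in
theorem Polynomial.mk_X_pow_eq_zero_iff {R : Type*} [CommRing R] [IsDomain R] {n k : ℕ} :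
    Ideal.Quotient.mk (Ideal.span {X ^ n}) (X ^ k : R[X]) = 0 ↔ n ≤ k := by
  rw [Ideal.Quotient.eq_zero_iff_mem, Ideal.mem_span_singleton,
    pow_dvd_pow_iff X_ne_zero not_isUnit_X]

namespace BlowUpAlg

section Lift

variable {S : Type*} [CommRing S] [Algebra ℚ S]

theorem blowUpIdeal_le_ker_aeval {l : ℕ} {u v : S} (h6 : u ^ 6 = 0) (h21 : u ^ 2 * v = 0)
    (hrel : (l : S) ^ 2 * u ^ 4 + (6 * l - 2) * u * v ^ 3 + l * v ^ 4 = 0) :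
    blowUpIdeal l ≤ RingHom.ker (aeval ![u, v]) := by
  rw [blowUpIdeal, Ideal.span_le]
  rintro p (rfl | rfl | rfl) <;> simp [h6, h21, ← hrel, map_ofNat]

variable {l : ℕ} {u v : S} (h6 : u ^ 6 = 0) (h21 : u ^ 2 * v = 0)
  (hrel : (l : S) ^ 2 * u ^ 4 + (6 * l - 2) * u * v ^ 3 + l * v ^ 4 = 0)

noncomputable def lift : BlowUpAlg l →ₐ[ℚ] S :=
  Ideal.Quotient.liftₐ _ (aeval ![u, v])
    fun _ hp ↦ RingHom.mem_ker.1 (blowUpIdeal_le_ker_aeval h6 h21 hrel hp)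

theorem lift_mk (p : MvPolynomial (Fin 2) ℚ) :
    lift h6 h21 hrel (Ideal.Quotient.mk _ p) = aeval ![u, v] p :=
  rfl

@[simp]
theorem lift_aBar : lift h6 h21 hrel (aBar l) = u := by
  simp [aBar, lift_mk]

@[simp]
theorem lift_xBar : lift h6 h21 hrel (xBar l) = v := by
  simp [xBar, lift_mk]

end Lift

theorem aBar_sq_mul_xBar (l : ℕ) : aBar l ^ 2 * xBar l = 0 := by
  rw [aBar, xBar, ← map_pow, ← map_mul, Ideal.Quotient.eq_zero_iff_mem]
  exact Ideal.subset_span (by simp)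

open Polynomial

local notation "𝕋" => ℚ[X] ⧸ Ideal.span {(X : ℚ[X]) ^ 8}

local notation "τ" => Ideal.Quotient.mk (Ideal.span {(X : ℚ[X]) ^ 8}) (X : ℚ[X])

theorem tau_pow_eight : τ ^ 8 = 0 := by
  rw [← map_pow, mk_X_pow_eq_zero_iff]

theorem tau_pow_ne_zero {k : ℕ} (hk : k < 8) : τ ^ k ≠ 0 := by
  rw [← map_pow, ne_eq, mk_X_pow_eq_zero_iff]
  omega

/-- `a ↦ t³, x ↦ t²` is a grading in which every relation of `A_l` has degree `≥ 8`, while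
`a x²` has degree `7`. -/
theorem aBar_mul_xBar_sq_ne_zero (l : ℕ) : aBar l * xBar l ^ 2 ≠ 0 := by
  have h8 := tau_pow_eight
  let φ := lift (l := l) (u := τ ^ 3) (v := τ ^ 2) (by linear_combination τ ^ 10 * h8)
    (by linear_combination h8) (by linear_combination (l ^ 2 * τ ^ 4 + (6 * l - 2) * τ + l) * h8)
  intro h
  exact tau_pow_ne_zero (k := 7) (by norm_num) <| by
    simpa [φ, ← pow_mul, ← pow_add] using congrArg φ h

theorem coeff_eq_zero_of_sq_mul_eq_zero {r : ℕ} {α₁ β₁ α₂ β₂ : ℚ}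
    (h : (α₁ • aBar r + β₁ • xBar r) ^ 2 * (α₂ • aBar r + β₂ • xBar r) = 0) :
    α₁ ^ 2 * α₂ = 0 ∧ β₁ ^ 2 * β₂ = 0 := by
  have h8 := tau_pow_eight
  let φa := lift (l := r) (u := τ ^ 2) (v := 0) (by linear_combination τ ^ 4 * h8) (by simp)
    (by linear_combination (r : 𝕋) ^ 2 * h8)
  let φx := lift (l := r) (u := 0) (v := τ ^ 2) (by simp) (by simp)
    (by linear_combination (r : 𝕋) * h8)
  constructor
  · have := congrArg φa h
    simp only [φa, map_mul, map_pow, map_add, map_smul, lift_aBar, lift_xBar, map_zero, smul_zero,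
      add_zero, _root_.smul_pow, smul_mul_smul_comm, ← pow_mul, ← pow_add] at this
    exact (smul_eq_zero.1 this).resolve_right (tau_pow_ne_zero (by norm_num))
  · have := congrArg φx h
    simp only [φx, map_mul, map_pow, map_add, map_smul, lift_aBar, lift_xBar, map_zero, smul_zero,
      zero_add, _root_.smul_pow, smul_mul_smul_comm, ← pow_mul, ← pow_add] at this
    exact (smul_eq_zero.1 this).resolve_right (tau_pow_ne_zero (by norm_num))

end BlowUpAlg

open BlowUpAlg in
theorem blowUpAlg_iso_diagonal_general (l r : ℕ)
    (g : BlowUpAlg l ≃ₐ[ℚ] BlowUpAlg r) (α₁ β₁ α₂ β₂ : ℚ)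
    (ha : g (aBar l) = α₁ • aBar r + β₁ • xBar r)
    (hx : g (xBar l) = α₂ • aBar r + β₂ • xBar r) :
    β₁ = 0 ∧ α₂ = 0 := by
  have hcube : (α₁ • aBar r + β₁ • xBar r) ^ 2 * (α₂ • aBar r + β₂ • xBar r) = 0 := by
    rw [← ha, ← hx, ← map_pow, ← map_mul, aBar_sq_mul_xBar, map_zero]
  obtain ⟨h₁, h₂⟩ := coeff_eq_zero_of_sq_mul_eq_zero hcube
  have hα : α₁ * α₂ ^ 2 = 0 := pow_eq_zero_iff two_ne_zero |>.1 (by linear_combination α₂ ^ 3 * h₁)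
  have hg : g (aBar l * xBar l ^ 2) ≠ 0 :=
    EmbeddingLike.map_ne_zero_iff.2 (aBar_mul_xBar_sq_ne_zero l)
  rw [map_mul, map_pow, ha, hx] at hg
  have hβ₁ : β₁ = 0 := by
    by_contra hβ₁
    have hβ₂ : β₂ = 0 := by simpa [hβ₁] using h₂
    apply hg
    rw [hβ₂, zero_smul, add_zero, smul_pow, add_mul, smul_mul_smul_comm, smul_mul_smul_comm, hα,
      zero_smul, mul_comm (xBar r), aBar_sq_mul_xBar, smul_zero, add_zero]
  have hα₁ : α₁ ≠ 0 := by
    rintro rfl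
    simp [hβ₁] at hg
  exact ⟨hβ₁, by simpa [hα₁] using h₁⟩

/-- Let `l`, `r` be positive integers and `g : A_l → A_r` an isomorphism of
`ℚ`-algebras with `g(ā) = α₁·b̄ + β₁·ȳ` and `g(x̄) = α₂·b̄ + β₂·ȳ`, where `ā, x̄` are the
residue classes of `a, x` in `A_l` and `b̄, ȳ` those in `A_r`.  Then `β₁ = 0` and
`α₂ = 0`: `g(ā)` is a scalar multiple of `b̄` and `g(x̄)` is a scalar multiple of `ȳ`. -/
theorem blowUpAlg_iso_diagonal (l r : ℕ) (hl : 0 < l) (hr : 0 < r)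
    (g : BlowUpAlg l ≃ₐ[ℚ] BlowUpAlg r) (α₁ β₁ α₂ β₂ : ℚ)
    (ha : g (aBar l) = α₁ • aBar r + β₁ • xBar r)
    (hx : g (xBar l) = α₂ • aBar r + β₂ • xBar r) :
    β₁ = 0 ∧ α₂ = 0 :=
  blowUpAlg_iso_diagonal_general l r g α₁ β₁ α₂ β₂ ha hx
end

section
/- Let m ≥ 1 and let (Q, d) be a CDGA over ℚ with Q^i = 0 for all i ≥ 2m+2. Let ω ∈ Q² be a cocycle (dω = 0) such that ω^m does not lie in the image of d : Q^{2m−1} → Q^{2m}. Regard Q as a module over the truncated polynomial algebra Λ(ω)/(ω^{m+1}) (with zero differential) via multiplication by ω. Then there exists a graded ℚ-subspace I ⊆ Q with d(I) ⊆ I and ω·I ⊆ I such that Q is the internal direct sum of I and the ℚ-linear span of 1, ω, ω², …, ω^m; in particular 1, ω, …, ω^m are linearly independent and span a free Λ(ω)/(ω^{m+1})-submodule, so Q ≅ I ⊕ Λ(ω)/(ω^{m+1}) as differential graded Λ(ω)/(ω^{m+1})-modules. Moreover, if in addition Q^{2m} = ℚ·ω^m, then such a subspace I is unique. -/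
section CdgaAux

variable {Q : Type} [Ring Q] [Algebra ℚ Q] (𝒬 : ℕ → Submodule ℚ Q) [GradedRing 𝒬]

/-- projection onto the degree-`i` component, as a linear map -/
noncomputable def prL (i : ℕ) : Q →ₗ[ℚ] Q where
  toFun q := (DirectSum.decompose 𝒬 q i : Q)
  map_add' q r := by
    show ((DirectSum.decompose 𝒬 (q + r) i : Q)) = _
    rw [DirectSum.decompose_add, DirectSum.add_apply, Submodule.coe_add]
  map_smul' c q := by
    show ((DirectSum.decompose 𝒬 (c • q) i : Q)) = _
    rw [DirectSum.decompose_smul, DirectSum.smul_apply, Submodule.coe_smul, RingHom.id_apply]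

lemma prL_apply (i : ℕ) (q : Q) : prL 𝒬 i q = (DirectSum.decompose 𝒬 q i : Q) := rfl

lemma prL_of_mem_same {x : Q} {i : ℕ} (hx : x ∈ 𝒬 i) : prL 𝒬 i x = x :=
  DirectSum.decompose_of_mem_same 𝒬 hx

lemma prL_of_mem_ne {x : Q} {i j : ℕ} (hx : x ∈ 𝒬 i) (h : i ≠ j) : prL 𝒬 j x = 0 :=
  DirectSum.decompose_of_mem_ne 𝒬 hx h

lemma prL_mem (i : ℕ) (q : Q) : prL 𝒬 i q ∈ 𝒬 i := SetLike.coe_mem _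

/-- components of `T q` for an operator `T` of degree `k`. -/
lemma prL_comp (T : Q →ₗ[ℚ] Q) (k : ℕ) (hT : ∀ i : ℕ, ∀ r ∈ 𝒬 i, T r ∈ 𝒬 (i + k))
    (q : Q) (j : ℕ) : prL 𝒬 (j + k) (T q) = T (prL 𝒬 j q) := by
  classical
  have hq : T q = ∑ i ∈ DFinsupp.support (DirectSum.decompose 𝒬 q), T (prL 𝒬 i q) := by
    conv_lhs => rw [← DirectSum.sum_support_decompose 𝒬 q]
    rw [map_sum]
    rfl
  rw [hq, map_sum, Finset.sum_eq_single j
      (fun b _ hb => prL_of_mem_ne 𝒬 (hT b _ (prL_mem 𝒬 b q)) (by omega))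
      (fun hj => by
        have h0 : prL 𝒬 j q = 0 := by
          have := DFinsupp.notMem_support_iff.mp hj
          rw [prL_apply, this, ZeroMemClass.coe_zero]
        rw [h0, map_zero, map_zero]),
    prL_of_mem_same 𝒬 (hT j _ (prL_mem 𝒬 j q))]

lemma prL_comp_lt (T : Q →ₗ[ℚ] Q) (k : ℕ) (hT : ∀ i : ℕ, ∀ r ∈ 𝒬 i, T r ∈ 𝒬 (i + k))
    (q : Q) (j : ℕ) (hj : j < k) : prL 𝒬 j (T q) = 0 := by
  classical
  have hq : T q = ∑ i ∈ DFinsupp.support (DirectSum.decompose 𝒬 q), T (prL 𝒬 i q) := by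
    conv_lhs => rw [← DirectSum.sum_support_decompose 𝒬 q]
    rw [map_sum]
    rfl
  rw [hq, map_sum]
  exact Finset.sum_eq_zero fun b _ =>
    prL_of_mem_ne 𝒬 (hT b _ (prL_mem 𝒬 b q)) (by omega)

/-- the functionals cutting out the complement -/
noncomputable def fL (φ : Q →ₗ[ℚ] ℚ) (ω : Q) (m j : ℕ) : Q →ₗ[ℚ] ℚ :=
  φ ∘ₗ (LinearMap.mulLeft ℚ (ω ^ (m - j))) ∘ₗ prL 𝒬 (2 * j)

lemma fL_apply (φ : Q →ₗ[ℚ] ℚ) (ω : Q) (m j : ℕ) (q : Q) :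
    fL 𝒬 φ ω m j q = φ (ω ^ (m - j) * prL 𝒬 (2 * j) q) := rfl

end CdgaAux

/-- **Complement of the powers of the symplectic class** (Lemma 8.2 of the paper).

Let `(Q, d)` be a CDGA over `ℚ`, presented as a (not necessarily commutative) `ℚ`-algebra
`Q` with an `ℕ`-grading `𝒬` which is graded commutative (`r r' = (-1)^{|r||r'|} r' r`),
together with a `ℚ`-linear differential `d` of degree `+1` with `d ∘ d = 0` satisfying
the Leibniz rule.  Assume `m ≥ 1`, `Qⁱ = 0` for `i ≥ 2m+2`, and let `ω ∈ Q²` be a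
cocycle with `ω^m` not a coboundary of an element of `Q^{2m-1}`.

Then there is a graded `ℚ`-subspace `I ⊆ Q`, stable under `d` and under multiplication
by `ω`, such that `Q` is the internal direct sum of `I` and the span of
`1, ω, ω², …, ω^m`; in particular `1, ω, …, ω^m` are linearly independent (so they span
a free `Λ(ω)/(ω^{m+1})`-submodule and `Q ≅ I ⊕ Λ(ω)/(ω^{m+1})` as differential graded
`Λ(ω)/(ω^{m+1})`-modules).  Moreover, if `Q^{2m} = ℚ·ω^m`, then such an `I` is unique. -/
theorem cdga_complement_of_symplectic_powers
    {Q : Type} [Ring Q] [Algebra ℚ Q]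
    (𝒬 : ℕ → Submodule ℚ Q) [GradedRing 𝒬]
    (hcomm : ∀ (i j : ℕ) (r r' : Q), r ∈ 𝒬 i → r' ∈ 𝒬 j →
      r * r' = ((-1 : ℚ) ^ (i * j)) • (r' * r))
    (d : Q →ₗ[ℚ] Q)
    (hd_deg : ∀ (i : ℕ), ∀ r ∈ 𝒬 i, d r ∈ 𝒬 (i + 1))
    (hd_sq : ∀ r : Q, d (d r) = 0)
    (hleib : ∀ (i : ℕ) (r r' : Q), r ∈ 𝒬 i →
      d (r * r') = d r * r' + ((-1 : ℚ) ^ i) • (r * d r'))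
    (m : ℕ) (hm : 1 ≤ m)
    (hvanish : ∀ i : ℕ, 2 * m + 2 ≤ i → 𝒬 i = ⊥)
    (ω : Q) (hω : ω ∈ 𝒬 2) (hdω : d ω = 0)
    (hωm : ¬ ∃ y ∈ 𝒬 (2 * m - 1), d y = ω ^ m) :
    (∃ I : Submodule ℚ Q,
      (∀ q ∈ I, ∀ i : ℕ, (DirectSum.decompose 𝒬 q i : Q) ∈ I) ∧
      (∀ q ∈ I, d q ∈ I) ∧
      (∀ q ∈ I, ω * q ∈ I) ∧
      IsCompl I (Submodule.span ℚ (Set.range fun j : Fin (m + 1) => ω ^ (j : ℕ))) ∧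
      ((𝒬 (2 * m) = Submodule.span ℚ {ω ^ m}) →
        ∀ I' : Submodule ℚ Q,
          (∀ q ∈ I', ∀ i : ℕ, (DirectSum.decompose 𝒬 q i : Q) ∈ I') →
          (∀ q ∈ I', d q ∈ I') →
          (∀ q ∈ I', ω * q ∈ I') →
          IsCompl I' (Submodule.span ℚ (Set.range fun j : Fin (m + 1) => ω ^ (j : ℕ))) →
          I' = I)) ∧
    LinearIndependent ℚ (fun j : Fin (m + 1) => ω ^ (j : ℕ)) := by
  classical
  -- powers of ω are homogeneous
  have hpow : ∀ k : ℕ, ω ^ k ∈ 𝒬 (2 * k) := fun k => by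
    simpa [smul_eq_mul, mul_comm] using SetLike.pow_mem_graded k hω
  -- d kills all powers of ω
  have hd1 : d (1 : Q) = 0 := by
    have h := hleib 0 1 1 (SetLike.one_mem_graded 𝒬)
    simp only [one_mul, mul_one, pow_zero, one_smul] at h
    have : d (1 : Q) + d 1 = d 1 + 0 := by rw [add_zero]; exact h.symm
    exact (add_left_cancel this)
  have hdpow : ∀ n : ℕ, d (ω ^ n) = 0 := by
    intro n
    induction n with
    | zero => simpa using hd1
    | succ n ih =>
      have h := hleib 2 ω (ω ^ n) hω
      rw [hdω, zero_mul, zero_add] at h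
      rw [pow_succ', h, ih, mul_zero, smul_zero]
  -- the coboundary subspace in degree 2m
  set B : Submodule ℚ Q := (𝒬 (2 * m - 1)).map d with hB
  have hωB : ω ^ m ∉ B := by
    rintro ⟨y, hy, hdy⟩
    exact hωm ⟨y, hy, hdy⟩
  -- a functional φ with φ(ωᵐ) = 1 vanishing on coboundaries from degree 2m-1
  obtain ⟨φ, hφ1, hφd⟩ :
      ∃ φ : Q →ₗ[ℚ] ℚ, φ (ω ^ m) = 1 ∧ ∀ y ∈ 𝒬 (2 * m - 1), φ (d y) = 0 := by
    have hv : B.mkQ (ω ^ m) ≠ 0 := by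
      intro h
      rw [Submodule.mkQ_apply] at h
      exact hωB ((Submodule.Quotient.mk_eq_zero B).mp h)
    obtain ⟨g, hg⟩ : ∃ g : (Q ⧸ B) →ₗ[ℚ] ℚ, g (B.mkQ (ω ^ m)) ≠ 0 := by
      by_contra h
      push_neg at h
      exact hv ((Module.forall_dual_apply_eq_zero_iff ℚ _).mp h)
    refine ⟨(g (B.mkQ (ω ^ m)))⁻¹ • (g ∘ₗ B.mkQ), ?_, ?_⟩
    · simp only [LinearMap.smul_apply, LinearMap.coe_comp, Function.comp_apply, smul_eq_mul]
      exact inv_mul_cancel₀ hg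
    · intro y hy
      have hdyB : d y ∈ B := ⟨y, hy, rfl⟩
      have h0 : B.mkQ (d y) = 0 := by
        rw [Submodule.mkQ_apply]
        exact (Submodule.Quotient.mk_eq_zero B).mpr hdyB
      simp only [LinearMap.smul_apply, LinearMap.coe_comp, Function.comp_apply, h0,
        map_zero, smul_zero]
  -- abbreviation for the functionals
  set f : ℕ → Q →ₗ[ℚ] ℚ := fun j => fL 𝒬 φ ω m j with hf
  have hfpow : ∀ j k : ℕ, j ≤ m → k ≤ m → f j (ω ^ k) = if j = k then 1 else 0 := by
    intro j k hj hk
    rw [hf, fL_apply]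
    by_cases h : j = k
    · subst h
      rw [prL_of_mem_same 𝒬 (hpow j), ← pow_add, if_pos rfl]
      rwa [Nat.sub_add_cancel hj]
    · rw [prL_of_mem_ne 𝒬 (hpow k) (by omega), mul_zero, map_zero, if_neg h]
  -- the complement
  set I : Submodule ℚ Q := ⨅ j : Fin (m + 1), LinearMap.ker (f j) with hI
  have hImem : ∀ q : Q, q ∈ I ↔ ∀ j : ℕ, j ≤ m → f j q = 0 := by
    intro q
    rw [hI, Submodule.mem_iInf]
    constructor
    · intro h j hj; exact h ⟨j, by omega⟩
    · intro h j; exact h j.1 (Nat.lt_succ_iff.mp j.isLt)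
  -- degree shifts for d and multiplication by ω
  have hmul_deg : ∀ i : ℕ, ∀ r ∈ 𝒬 i, (LinearMap.mulLeft ℚ ω) r ∈ 𝒬 (i + 2) := by
    intro i r hr
    have := SetLike.mul_mem_graded hω hr
    rwa [Nat.add_comm] at this
  -- I is closed under components
  have hIcomp : ∀ q ∈ I, ∀ i : ℕ, (DirectSum.decompose 𝒬 q i : Q) ∈ I := by
    intro q hq i
    rw [hImem]
    intro j hj
    rw [hf, fL_apply, ← prL_apply]
    by_cases h : i = 2 * j
    · subst h
      rw [prL_of_mem_same 𝒬 (prL_mem 𝒬 _ q)]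
      exact (hImem q).mp hq j hj
    · rw [prL_of_mem_ne 𝒬 (prL_mem 𝒬 i q) h, mul_zero, map_zero]
  -- I is closed under d
  have hId : ∀ q ∈ I, d q ∈ I := by
    intro q hq
    rw [hImem]
    intro j hj
    rcases Nat.eq_zero_or_pos j with h0 | h1
    · subst h0
      rw [hf, fL_apply, show 2 * 0 = 0 from rfl,
        prL_comp_lt 𝒬 d 1 hd_deg q 0 (by omega), mul_zero, map_zero]
    · have hsh : prL 𝒬 (2 * j) (d q) = d (prL 𝒬 (2 * j - 1) q) := by
        have := prL_comp 𝒬 d 1 hd_deg q (2 * j - 1)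
        rwa [show 2 * j - 1 + 1 = 2 * j by omega] at this
      rw [hf, fL_apply, hsh]
      set x : Q := prL 𝒬 (2 * j - 1) q with hx
      have hxm : x ∈ 𝒬 (2 * j - 1) := prL_mem 𝒬 _ q
      have hlx := hleib (2 * (m - j)) (ω ^ (m - j)) x (hpow (m - j))
      rw [hdpow (m - j), zero_mul, zero_add,
        show ((-1 : ℚ) ^ (2 * (m - j))) = 1 by rw [pow_mul]; norm_num, one_smul] at hlx
      rw [← hlx]
      apply hφd
      have := SetLike.mul_mem_graded (hpow (m - j)) hxm
      rwa [show 2 * (m - j) + (2 * j - 1) = 2 * m - 1 by omega] at this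
  -- I is closed under multiplication by ω
  have hIω : ∀ q ∈ I, ω * q ∈ I := by
    intro q hq
    rw [hImem]
    intro j hj
    rcases Nat.eq_zero_or_pos j with h0 | h1
    · subst h0
      rw [hf, fL_apply, show 2 * 0 = 0 from rfl,
        show ω * q = (LinearMap.mulLeft ℚ ω) q from rfl,
        prL_comp_lt 𝒬 _ 2 hmul_deg q 0 (by omega), mul_zero, map_zero]
    · have hsh : prL 𝒬 (2 * j) (ω * q) = ω * prL 𝒬 (2 * (j - 1)) q := by
        have := prL_comp 𝒬 (LinearMap.mulLeft ℚ ω) 2 hmul_deg q (2 * (j - 1))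
        rw [show 2 * (j - 1) + 2 = 2 * j by omega] at this
        exact this
      rw [hf, fL_apply, hsh, ← mul_assoc, ← pow_succ,
        show m - j + 1 = m - (j - 1) by omega]
      exact (hImem q).mp hq (j - 1) (by omega)
  -- the span of the powers
  set S : Submodule ℚ Q :=
    Submodule.span ℚ (Set.range fun j : Fin (m + 1) => ω ^ (j : ℕ)) with hS
  have hpowS : ∀ k : ℕ, k ≤ m → ω ^ k ∈ S := by
    intro k hk
    exact Submodule.subset_span ⟨⟨k, by omega⟩, rfl⟩
  -- the projection onto S
  set π : Q →ₗ[ℚ] Q :=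
    ∑ j ∈ Finset.range (m + 1), (f j).smulRight (ω ^ j) with hπ
  have hπ_apply : ∀ q : Q, π q = ∑ j ∈ Finset.range (m + 1), f j q • ω ^ j := by
    intro q
    rw [hπ, LinearMap.sum_apply]
    exact Finset.sum_congr rfl fun j _ => rfl
  have hπS : ∀ q : Q, π q ∈ S := by
    intro q
    rw [hπ_apply]
    exact Submodule.sum_mem _ fun j hj =>
      Submodule.smul_mem _ _ (hpowS j (Nat.lt_succ_iff.mp (Finset.mem_range.mp hj)))
  have hπpow : ∀ k : ℕ, k ≤ m → π (ω ^ k) = ω ^ k := by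
    intro k hk
    rw [hπ_apply]
    have : ∀ j ∈ Finset.range (m + 1), f j (ω ^ k) • ω ^ j
        = if j = k then ω ^ j else 0 := by
      intro j hj
      rw [hfpow j k (Nat.lt_succ_iff.mp (Finset.mem_range.mp hj)) hk]
      by_cases h : j = k <;> simp [h]
    rw [Finset.sum_congr rfl this, Finset.sum_ite_eq' (Finset.range (m + 1)) k (fun j => ω ^ j),
      if_pos (Finset.mem_range.mpr (by omega))]
  have hπfix : ∀ s ∈ S, π s = s := by
    intro s hs
    induction hs using Submodule.span_induction with
    | mem x hx => obtain ⟨j, rfl⟩ := hx; exact hπpow j (Nat.lt_succ_iff.mp j.isLt)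
    | zero => rw [map_zero]
    | add x y _ _ hx hy => rw [map_add, hx, hy]
    | smul c x _ hx => rw [map_smul, hx]
  have hkerπ : ∀ q : Q, q ∈ I → π q = 0 := by
    intro q hq
    rw [hπ_apply]
    exact Finset.sum_eq_zero fun j hj => by
      rw [(hImem q).mp hq j (Nat.lt_succ_iff.mp (Finset.mem_range.mp hj)), zero_smul]
    -- note: j ∈ range (m+1) gives j ≤ m
  have hsub : ∀ q : Q, q - π q ∈ I := by
    intro q
    rw [hImem]
    intro j hj
    rw [map_sub, hπ_apply, map_sum, sub_eq_zero]
    have : ∀ k ∈ Finset.range (m + 1), f j (f k q • ω ^ k)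
        = if k = j then f j q else 0 := by
      intro k hk
      rw [map_smul, hfpow j k hj (Nat.lt_succ_iff.mp (Finset.mem_range.mp hk)), smul_eq_mul]
      by_cases h : k = j
      · subst h; simp
      · rw [if_neg (fun hh => h hh.symm), if_neg h, mul_zero]
    rw [Finset.sum_congr rfl this, Finset.sum_ite_eq' (Finset.range (m + 1)) j
      (fun _ => f j q), if_pos (Finset.mem_range.mpr (by omega))]
  -- disjointness and codisjointness
  have hdisj : Disjoint I S := by
    rw [Submodule.disjoint_def]
    intro x hxI hxS
    rw [← hπfix x hxS, hkerπ x hxI]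
  have hcodis : Codisjoint I S := by
    rw [codisjoint_iff, eq_top_iff]
    intro q _
    exact Submodule.mem_sup.mpr ⟨q - π q, hsub q, π q, hπS q, by abel⟩
  have hcompl : IsCompl I S := ⟨hdisj, hcodis⟩
  -- ω-power stability of arbitrary I'
  constructor
  · refine ⟨I, hIcomp, hId, hIω, hcompl, ?_⟩
    -- uniqueness
    intro h2m I' hI'comp hI'd hI'ω hI'compl
    have hI'ωpow : ∀ n : ℕ, ∀ x ∈ I', ω ^ n * x ∈ I' := by
      intro n
      induction n with
      | zero => intro x hx; simpa using hx
      | succ n ih =>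
        intro x hx
        rw [pow_succ', mul_assoc]
        exact hI'ω _ (ih x hx)
    have hle1 : I' ≤ I := by
      intro x hx
      rw [hImem]
      intro j hj
      rw [hf, fL_apply]
      set y : Q := prL 𝒬 (2 * j) x with hy
      have hyI' : y ∈ I' := hI'comp x hx (2 * j)
      have hyQ : y ∈ 𝒬 (2 * j) := prL_mem 𝒬 _ x
      have hmem2m : ω ^ (m - j) * y ∈ 𝒬 (2 * m) := by
        have := SetLike.mul_mem_graded (hpow (m - j)) hyQ
        rwa [show 2 * (m - j) + 2 * j = 2 * m by omega] at this
      have hmemI' : ω ^ (m - j) * y ∈ I' := hI'ωpow (m - j) y hyI'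
      have hmemS : ω ^ (m - j) * y ∈ S := by
        rw [h2m] at hmem2m
        obtain ⟨c, hc⟩ := Submodule.mem_span_singleton.mp hmem2m
        rw [← hc]
        exact Submodule.smul_mem _ _ (hpowS m le_rfl)
      have : ω ^ (m - j) * y = 0 :=
        Submodule.disjoint_def.mp hI'compl.disjoint _ hmemI' hmemS
      rw [this, map_zero]
    have hle2 : I ≤ I' := by
      intro q hq
      obtain ⟨a, haI', s, hsS, has⟩ := Submodule.mem_sup.mp
        (by rw [hI'compl.sup_eq_top]; exact Submodule.mem_top :
          q ∈ I' ⊔ S)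
      have hsI : s ∈ I := by
        have : s = q - a := by rw [← has]; abel
        rw [this]
        exact Submodule.sub_mem _ hq (hle1 haI')
      have : s = 0 := Submodule.disjoint_def.mp hdisj s hsI hsS
      rw [this, add_zero] at has
      rwa [← has]
    exact le_antisymm hle1 hle2
  · -- linear independence
    rw [Fintype.linearIndependent_iff]
    intro g hg k
    have h0 : f k (∑ j : Fin (m + 1), g j • ω ^ (j : ℕ)) = 0 := by rw [hg, map_zero]
    rw [map_sum] at h0
    have : ∀ j : Fin (m + 1), f (k : ℕ) (g j • ω ^ (j : ℕ))
        = if j = k then g j else 0 := by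
      intro j
      rw [map_smul, hfpow k j (Nat.lt_succ_iff.mp k.isLt) (Nat.lt_succ_iff.mp j.isLt), smul_eq_mul]
      by_cases h : j = k
      · subst h; simp
      · rw [if_neg (fun hh => h (Fin.ext hh.symm)), if_neg h, mul_zero]
    rw [Finset.sum_congr rfl (fun j _ => this j),
      Finset.sum_ite_eq' Finset.univ k (fun j => g j), if_pos (Finset.mem_univ k)] at h0
    exact h0
end

section
/- Let R be a CDGA over ℚ, let Q be a differential graded R-module, and let f : Q → R be a morphism of differential graded R-modules (degree 0, R-linear, commuting with the differentials). Equip the mapping cone R ⊕_f sQ with the semi-trivial product. Suppose that either (1) f : Q → R is the inclusion of a differential ideal of R, with the R-module structure on Q given by multiplication in R, or (2) there exists p ∈ ℕ such that Q^i = 0 for all i < p and all i ≥ 2p. Then the semi-trivial product together with the mapping cone differential makes R ⊕_f sQ a CDGA; in particular the product is associative, unital, graded commutative, and satisfies the Leibniz rule with respect to the mapping cone differential. -/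
/-!
Write `(r, q) ∈ R × Q` for `r + sq`. Graded commutativity of `R` turns `Q` into a right module,
`q • r = (-1)^(|q||r|) r • q`, and the semi-trivial product becomes
`(r, q)(r', q') = (r r', (-1)^|r| r • q' + q • r')`. Associativity, the unit and graded
commutativity then follow from the bimodule identities. In the Leibniz rule everything cancels
except `(-1)^|r| (q • f q' - f q • q')`, so it holds exactly when `f q • q' = q • f q'`. For
injective `f` this follows after applying `f`, both sides becoming `f q * f q'`; in case (2) both
sides have degree `|q| + |q'| ≥ 2p` unless `q` or `q'` vanishes.
-/

/-- The mapping cone differential on `R ⊕ sQ` (identified with `R × Q`, where the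
second component records the desuspended element):  `D(r, sq) = (d_R r + f q, −s(d_Q q))`. -/
def coneDifferential {R Q : Type} [Ring R] [Algebra ℚ R]
    [AddCommGroup Q] [Module ℚ Q] [Module R Q] [IsScalarTower ℚ R Q]
    (dR : R →ₗ[ℚ] R) (dQ : Q →ₗ[ℚ] Q) (f : Q →ₗ[R] R) : R × Q → R × Q :=
  fun u => (dR u.1 + f u.2, -(dQ u.2))

open DirectSum

theorem neg_one_zpow_congr {α : Type*} [DivisionMonoid α] [HasDistribNeg α] {m n : ℤ}
    (h : Even m ↔ Even n) : (-1 : α) ^ m = (-1) ^ n := by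
  simp only [neg_one_zpow_eq_ite, h]

section GradedLift

variable {ι S M N : Type*} [DecidableEq ι] [Semiring S] [AddCommMonoid M] [Module S M]
  [AddCommMonoid N] [Module S N] (ℳ : ι → Submodule S M) [Decomposition ℳ]

noncomputable def gradedLift (φ : ι → M →ₗ[S] N) : M →ₗ[S] N :=
  (toModule S ι N fun i => φ i ∘ₗ (ℳ i).subtype) ∘ₗ (decomposeLinearEquiv ℳ).toLinearMap

theorem gradedLift_of_mem (φ : ι → M →ₗ[S] N) {i : ι} {x : M} (hx : x ∈ ℳ i) :
    gradedLift ℳ φ x = φ i x := by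
  rw [gradedLift, LinearMap.comp_apply, LinearEquiv.coe_coe, decomposeLinearEquiv_apply,
    decompose_of_mem ℳ hx, ← lof_eq_of S, toModule_lof]
  rfl

end GradedLift

section Parity

variable {S M : Type*} [Semiring S] [AddCommMonoid M] [Module S M]
  (ℳ : ℤ → Submodule S M) [Decomposition ℳ]

noncomputable def evenPart : M →ₗ[S] M :=
  gradedLift ℳ fun i => if Even i then LinearMap.id else 0

noncomputable def oddPart : M →ₗ[S] M :=
  gradedLift ℳ fun i => if Even i then 0 else LinearMap.id

variable {ℳ}

theorem evenPart_of_mem {i : ℤ} {x : M} (hx : x ∈ ℳ i) :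
    evenPart ℳ x = if Even i then x else 0 := by
  rw [evenPart, gradedLift_of_mem ℳ _ hx]
  split_ifs <;> rfl

theorem oddPart_of_mem {i : ℤ} {x : M} (hx : x ∈ ℳ i) :
    oddPart ℳ x = if Even i then 0 else x := by
  rw [oddPart, gradedLift_of_mem ℳ _ hx]
  split_ifs <;> rfl

theorem evenPart_add_oddPart (x : M) : evenPart ℳ x + oddPart ℳ x = x := by
  induction x using Decomposition.inductionOn ℳ with
  | zero => simp
  | homogeneous x =>
    rw [evenPart_of_mem x.2, oddPart_of_mem x.2]
    split_ifs <;> simp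
  | add x y hx hy => rw [map_add, map_add, add_add_add_comm, hx, hy]

end Parity

section GradeInvolution

variable {M : Type*} [AddCommGroup M] [Module ℚ M] (ℳ : ℤ → Submodule ℚ M) [Decomposition ℳ]

noncomputable def gradeInvolution : M →ₗ[ℚ] M :=
  gradedLift ℳ fun i => (-1 : ℚ) ^ i • LinearMap.id

variable {ℳ}

theorem gradeInvolution_of_mem {i : ℤ} {x : M} (hx : x ∈ ℳ i) :
    gradeInvolution ℳ x = (-1 : ℚ) ^ i • x :=
  gradedLift_of_mem ℳ _ hx

end GradeInvolution

section GradedRing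

variable {R : Type*} [Ring R] [Algebra ℚ R] {𝒜 : ℤ → Submodule ℚ R} [GradedRing 𝒜]

theorem gradeInvolution_one : gradeInvolution 𝒜 (1 : R) = 1 := by
  rw [gradeInvolution_of_mem SetLike.GradedOne.one_mem, zpow_zero, one_smul]

theorem gradeInvolution_mul (a b : R) :
    gradeInvolution 𝒜 (a * b) = gradeInvolution 𝒜 a * gradeInvolution 𝒜 b := by
  induction a using Decomposition.inductionOn 𝒜 with
  | zero => simp
  | add a a' ha ha' => rw [add_mul, map_add, map_add, ha, ha', add_mul]
  | @homogeneous i a =>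
    induction b using Decomposition.inductionOn 𝒜 with
    | zero => simp
    | add b b' hb hb' => rw [mul_add, map_add, map_add, hb, hb', mul_add]
    | @homogeneous j b =>
      rw [gradeInvolution_of_mem (SetLike.mul_mem_graded a.2 b.2), gradeInvolution_of_mem a.2,
        gradeInvolution_of_mem b.2, smul_mul_smul_comm, zpow_add₀ (by norm_num)]

end GradedRing

def IsGradedCommutative {R : Type*} [Ring R] [Module ℚ R] (𝒜 : ℤ → Submodule ℚ R) : Prop :=
  ∀ ⦃i j : ℤ⦄ ⦃r r' : R⦄, r ∈ 𝒜 i → r' ∈ 𝒜 j → r * r' = (-1 : ℚ) ^ (i * j) • (r' * r)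

section RightSMul

variable {R Q : Type*} [Ring R] [Algebra ℚ R] (𝒜 : ℤ → Submodule ℚ R) [GradedRing 𝒜]
  [AddCommGroup Q] [Module ℚ Q] [Module R Q] [IsScalarTower ℚ R Q]
  (𝒬 : ℤ → Submodule ℚ Q) [Decomposition 𝒬]

noncomputable def rightSMul : Q →ₗ[ℚ] R →ₗ[ℚ] Q :=
  ((Algebra.lsmul ℚ ℚ Q).toLinearMap.compl₂ (evenPart 𝒬) +
    ((Algebra.lsmul ℚ ℚ Q).toLinearMap ∘ₗ gradeInvolution 𝒜).compl₂ (oddPart 𝒬)).flip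

theorem rightSMul_apply (q : Q) (r : R) :
    rightSMul 𝒜 𝒬 q r = r • evenPart 𝒬 q + gradeInvolution 𝒜 r • oddPart 𝒬 q :=
  rfl

variable {𝒜 𝒬}

theorem rightSMul_of_mem {i j : ℤ} {r : R} {q : Q} (hr : r ∈ 𝒜 i) (hq : q ∈ 𝒬 j) :
    rightSMul 𝒜 𝒬 q r = (-1 : ℚ) ^ (i * j) • r • q := by
  rw [rightSMul_apply, evenPart_of_mem hq, oddPart_of_mem hq, gradeInvolution_of_mem hr]
  split_ifs with hj
  · rw [smul_zero, add_zero, (hj.mul_left i).neg_one_zpow, one_smul]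
  · rw [smul_zero, zero_add, smul_assoc,
      neg_one_zpow_congr (by rw [Int.even_mul]; tauto : Even i ↔ Even (i * j))]

theorem rightSMul_one (q : Q) : rightSMul 𝒜 𝒬 q 1 = q := by
  rw [rightSMul_apply, gradeInvolution_one, one_smul, one_smul, evenPart_add_oddPart]

theorem map_rightSMul (hcomm : IsGradedCommutative 𝒜) (f : Q →ₗ[R] R)
    (hf : ∀ i, ∀ q ∈ 𝒬 i, f q ∈ 𝒜 i) (q : Q) (r : R) :
    f (rightSMul 𝒜 𝒬 q r) = f q * r := by
  induction q using Decomposition.inductionOn 𝒬 with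
  | zero => simp
  | add q q' hq hq' => simp only [map_add, LinearMap.add_apply, add_mul, hq, hq']
  | @homogeneous j q =>
    induction r using Decomposition.inductionOn 𝒜 with
    | zero => simp
    | add r r' hr hr' => simp only [map_add, mul_add, hr, hr']
    | @homogeneous i r =>
      rw [rightSMul_of_mem r.2 q.2, f.map_smul_of_tower, map_smul, smul_eq_mul,
        hcomm r.2 (hf j q q.2), smul_smul, ← mul_zpow, neg_one_mul, neg_neg, one_zpow, one_smul]

theorem dQ_rightSMul (dR : R →ₗ[ℚ] R) (dQ : Q →ₗ[ℚ] Q)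
    (hdR : ∀ i, ∀ r ∈ 𝒜 i, dR r ∈ 𝒜 (i + 1))
    (hleibQ : ∀ (i : ℤ) (r : R) (q : Q), r ∈ 𝒜 i → dQ (r • q) = dR r • q + (-1 : ℚ) ^ i • r • dQ q)
    (hdQ : ∀ i, ∀ q ∈ 𝒬 i, dQ q ∈ 𝒬 (i + 1)) {m : ℤ} {q : Q} (hq : q ∈ 𝒬 m) (r : R) :
    dQ (rightSMul 𝒜 𝒬 q r) = rightSMul 𝒜 𝒬 (dQ q) r + (-1 : ℚ) ^ m • rightSMul 𝒜 𝒬 q (dR r) := by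
  induction r using Decomposition.inductionOn 𝒜 with
  | zero => simp
  | add r r' hr hr' => simp only [map_add, smul_add, hr, hr']; abel
  | @homogeneous j r =>
    rw [rightSMul_of_mem r.2 hq, map_smul, hleibQ j r q r.2, rightSMul_of_mem r.2 (hdQ m q hq),
      rightSMul_of_mem (hdR j r r.2) hq, smul_add, smul_smul, smul_smul, ← zpow_add₀ (by norm_num),
      ← zpow_add₀ (by norm_num), add_comm]
    congr 2 <;> exact neg_one_zpow_congr (by simp only [Int.even_add, Int.even_mul]; tauto)

theorem map_smul_eq_rightSMul_of_injective (hcomm : IsGradedCommutative 𝒜) {f : Q →ₗ[R] R}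
    (hf : ∀ i, ∀ q ∈ 𝒬 i, f q ∈ 𝒜 i) (hinj : Function.Injective f) (q q' : Q) :
    f q • q' = rightSMul 𝒜 𝒬 q (f q') :=
  hinj <| by rw [map_smul, smul_eq_mul, map_rightSMul hcomm f hf]

variable [SetLike.GradedSMul 𝒜 𝒬]

theorem smul_rightSMul (hcomm : IsGradedCommutative 𝒜) (a c : R) (q : Q) :
    rightSMul 𝒜 𝒬 (a • q) c = a • rightSMul 𝒜 𝒬 q c := by
  induction q using Decomposition.inductionOn 𝒬 with
  | zero => simp
  | add q q' hq hq' => simp only [smul_add, map_add, LinearMap.add_apply, hq, hq']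
  | @homogeneous j q =>
    induction a using Decomposition.inductionOn 𝒜 with
    | zero => simp
    | add a a' ha ha' => simp only [add_smul, map_add, LinearMap.add_apply, ha, ha']
    | @homogeneous i a =>
      induction c using Decomposition.inductionOn 𝒜 with
      | zero => simp
      | add c c' hc hc' => simp only [map_add, smul_add, hc, hc']
      | @homogeneous k c =>
        rw [rightSMul_of_mem c.2 (SetLike.GradedSMul.smul_mem a.2 q.2), rightSMul_of_mem c.2 q.2,
          ← mul_smul, hcomm c.2 a.2, smul_assoc, mul_smul, smul_comm (a : R) ((-1 : ℚ) ^ (k * j)),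
          smul_smul, ← zpow_add₀ (by norm_num)]
        congr 1
        exact neg_one_zpow_congr (by simp only [vadd_eq_add, Int.even_add, Int.even_mul]; tauto)

theorem rightSMul_rightSMul (hcomm : IsGradedCommutative 𝒜) (q : Q) (b c : R) :
    rightSMul 𝒜 𝒬 (rightSMul 𝒜 𝒬 q b) c = rightSMul 𝒜 𝒬 q (b * c) := by
  induction q using Decomposition.inductionOn 𝒬 with
  | zero => simp
  | add q q' hq hq' => simp only [map_add, LinearMap.add_apply, hq, hq']
  | @homogeneous j q =>
    induction b using Decomposition.inductionOn 𝒜 with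
    | zero => simp
    | add b b' hb hb' => simp only [map_add, LinearMap.add_apply, add_mul, hb, hb']
    | @homogeneous i b =>
      induction c using Decomposition.inductionOn 𝒜 with
      | zero => simp
      | add c c' hc hc' => simp only [map_add, mul_add, hc, hc']
      | @homogeneous k c =>
        rw [rightSMul_of_mem b.2 q.2, LinearMap.map_smul₂,
          rightSMul_of_mem c.2 (SetLike.GradedSMul.smul_mem b.2 q.2),
          rightSMul_of_mem (SetLike.mul_mem_graded b.2 c.2) q.2, hcomm b.2 c.2, smul_assoc]
        simp only [smul_smul, ← zpow_add₀ (show (-1 : ℚ) ≠ 0 by norm_num)]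
        congr 1
        exact neg_one_zpow_congr (by simp only [vadd_eq_add, Int.even_add, Int.even_mul]; tauto)

theorem map_smul_eq_rightSMul_of_concentrated {f : Q →ₗ[R] R} (hf : ∀ i, ∀ q ∈ 𝒬 i, f q ∈ 𝒜 i)
    {p : ℕ} (hp : ∀ i : ℤ, (i < p ∨ 2 * (p : ℤ) ≤ i) → 𝒬 i = ⊥) (q q' : Q) :
    f q • q' = rightSMul 𝒜 𝒬 q (f q') := by
  have eq_zero {i : ℤ} {x : Q} (hx : x ∈ 𝒬 i) (hi : i < p ∨ 2 * (p : ℤ) ≤ i) : x = 0 := by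
    rwa [hp i hi, Submodule.mem_bot] at hx
  induction q using Decomposition.inductionOn 𝒬 with
  | zero => simp
  | add q₁ q₂ h₁ h₂ => simp only [map_add, add_smul, LinearMap.add_apply, h₁, h₂]
  | @homogeneous a q =>
    induction q' using Decomposition.inductionOn 𝒬 with
    | zero => simp
    | add q₁ q₂ h₁ h₂ => simp only [map_add, smul_add, h₁, h₂]
    | @homogeneous b q' =>
      by_cases ha : a < p ∨ 2 * (p : ℤ) ≤ a
      · simp [eq_zero q.2 ha]
      by_cases hb : b < p ∨ 2 * (p : ℤ) ≤ b
      · simp [eq_zero q'.2 hb]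
      rw [rightSMul_of_mem (hf b q' q'.2) q.2,
        eq_zero (SetLike.GradedSMul.smul_mem (hf a q q.2) q'.2) (by rw [vadd_eq_add]; omega),
        eq_zero (SetLike.GradedSMul.smul_mem (hf b q' q'.2) q.2) (by rw [vadd_eq_add]; omega),
        smul_zero]

end RightSMul

section Cone

variable {R Q : Type} [Ring R] [Algebra ℚ R] (𝒜 : ℤ → Submodule ℚ R) [GradedRing 𝒜]
  [AddCommGroup Q] [Module ℚ Q] [Module R Q] [IsScalarTower ℚ R Q]
  (𝒬 : ℤ → Submodule ℚ Q) [Decomposition 𝒬]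

/-- The semi-trivial product, using `r • sq' = (-1)^|r| s(r • q')` and
`sq • r' = (-1)^(|r'||sq|) r' • sq = s(q • r')`. -/
noncomputable def coneMul : R × Q →ₗ[ℚ] R × Q →ₗ[ℚ] R × Q :=
  LinearMap.mk₂ ℚ (fun u v => (u.1 * v.1, gradeInvolution 𝒜 u.1 • v.2 + rightSMul 𝒜 𝒬 u.2 v.1))
    (fun u u' v => by simp only [Prod.fst_add, Prod.snd_add, add_mul, map_add, add_smul,
      LinearMap.add_apply, Prod.mk_add_mk, add_add_add_comm])
    (fun c u v => by simp only [Prod.smul_fst, Prod.smul_snd, smul_mul_assoc, map_smul, smul_assoc,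
      LinearMap.smul_apply, Prod.smul_mk, smul_add])
    (fun u v v' => by simp only [Prod.fst_add, Prod.snd_add, mul_add, map_add, smul_add,
      Prod.mk_add_mk, add_add_add_comm])
    (fun c u v => by simp only [Prod.smul_fst, Prod.smul_snd, mul_smul_comm, map_smul,
      smul_comm _ c, Prod.smul_mk, smul_add])

theorem coneMul_apply (u v : R × Q) :
    coneMul 𝒜 𝒬 u v = (u.1 * v.1, gradeInvolution 𝒜 u.1 • v.2 + rightSMul 𝒜 𝒬 u.2 v.1) :=
  rfl

variable {𝒜 𝒬}

theorem one_coneMul (u : R × Q) : coneMul 𝒜 𝒬 (1, 0) u = u := by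
  simp [coneMul_apply, gradeInvolution_one]

theorem coneMul_one (u : R × Q) : coneMul 𝒜 𝒬 u (1, 0) = u := by
  simp [coneMul_apply, rightSMul_one]

theorem coneMul_assoc [SetLike.GradedSMul 𝒜 𝒬] (hcomm : IsGradedCommutative 𝒜) (u v w : R × Q) :
    coneMul 𝒜 𝒬 (coneMul 𝒜 𝒬 u v) w = coneMul 𝒜 𝒬 u (coneMul 𝒜 𝒬 v w) := by
  simp only [coneMul_apply, mul_assoc, map_add, LinearMap.add_apply, gradeInvolution_mul,
    mul_smul, smul_rightSMul hcomm, rightSMul_rightSMul hcomm, smul_add, add_assoc]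

theorem coneMul_comm_of_mem (hcomm : IsGradedCommutative 𝒜) {i j : ℤ} {r r' : R} {q q' : Q}
    (hr : r ∈ 𝒜 i) (hq : q ∈ 𝒬 (i + 1)) (hr' : r' ∈ 𝒜 j) (hq' : q' ∈ 𝒬 (j + 1)) :
    coneMul 𝒜 𝒬 (r, q) (r', q') = (-1 : ℚ) ^ (i * j) • coneMul 𝒜 𝒬 (r', q') (r, q) := by
  simp only [coneMul_apply, Prod.smul_mk, gradeInvolution_of_mem hr, gradeInvolution_of_mem hr',
    rightSMul_of_mem hr hq', rightSMul_of_mem hr' hq, smul_add, smul_assoc, smul_smul,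
    ← zpow_add₀ (show (-1 : ℚ) ≠ 0 by norm_num)]
  refine Prod.ext (hcomm hr hr') ?_
  dsimp only
  rw [add_comm]
  congr 2 <;> exact neg_one_zpow_congr (by simp only [Int.even_add, Int.even_mul]; tauto)

theorem coneDifferential_coneMul (hcomm : IsGradedCommutative 𝒜) (dR : R →ₗ[ℚ] R)
    (dQ : Q →ₗ[ℚ] Q) (f : Q →ₗ[R] R) (hdR : ∀ i, ∀ r ∈ 𝒜 i, dR r ∈ 𝒜 (i + 1))
    (hleibR : ∀ (i : ℤ) (r r' : R), r ∈ 𝒜 i → dR (r * r') = dR r * r' + (-1 : ℚ) ^ i • (r * dR r'))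
    (hdQ : ∀ i, ∀ q ∈ 𝒬 i, dQ q ∈ 𝒬 (i + 1))
    (hleibQ : ∀ (i : ℤ) (r : R) (q : Q), r ∈ 𝒜 i → dQ (r • q) = dR r • q + (-1 : ℚ) ^ i • r • dQ q)
    (hf : ∀ i, ∀ q ∈ 𝒬 i, f q ∈ 𝒜 i) (hswap : ∀ q q', f q • q' = rightSMul 𝒜 𝒬 q (f q'))
    {i : ℤ} {r : R} {q : Q} (hr : r ∈ 𝒜 i) (hq : q ∈ 𝒬 (i + 1)) (v : R × Q) :
    coneDifferential dR dQ f (coneMul 𝒜 𝒬 (r, q) v) =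
      coneMul 𝒜 𝒬 (coneDifferential dR dQ f (r, q)) v +
        (-1 : ℚ) ^ i • coneMul 𝒜 𝒬 (r, q) (coneDifferential dR dQ f v) := by
  obtain ⟨r', q'⟩ := v
  have hdr : dR r + f q ∈ 𝒜 (i + 1) := add_mem (hdR i r hr) (hf _ q hq)
  simp only [coneMul_apply, coneDifferential, Prod.smul_mk, Prod.mk_add_mk,
    gradeInvolution_of_mem hr, gradeInvolution_of_mem hdr, smul_assoc,
    zpow_add_one₀ (show (-1 : ℚ) ≠ 0 by norm_num)]
  refine Prod.ext ?_ ?_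
  · dsimp only
    rw [map_add, f.map_smul_of_tower, map_smul, smul_eq_mul, map_rightSMul hcomm f hf,
      hleibR i r r' hr]
    simp only [add_mul, mul_add, smul_add]
    abel
  · dsimp only
    rw [map_add, map_smul, hleibQ i r q' hr, dQ_rightSMul dR dQ hdR hleibQ hdQ hq, map_add, ← hswap,
      map_neg, LinearMap.neg_apply]
    simp only [zpow_add_one₀ (show (-1 : ℚ) ≠ 0 by norm_num), mul_neg, mul_one, neg_smul, add_smul,
      smul_add, smul_neg, smul_smul]
    abel

theorem coneDifferential_coneDifferential {dR : R →ₗ[ℚ] R} {dQ : Q →ₗ[ℚ] Q} {f : Q →ₗ[R] R}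
    (hdR_sq : ∀ r, dR (dR r) = 0) (hdQ_sq : ∀ q, dQ (dQ q) = 0)
    (hf : ∀ q, dR (f q) = f (dQ q)) (u : R × Q) :
    coneDifferential dR dQ f (coneDifferential dR dQ f u) = 0 := by
  simp [coneDifferential, hdR_sq, hdQ_sq, hf]

end Cone

theorem semiTrivial_cdga_structure_on_mapping_cone_general
    {R Q : Type} [Ring R] [Algebra ℚ R]
    (𝒜 : ℤ → Submodule ℚ R) [GradedRing 𝒜]
    (hcomm : ∀ (i j : ℤ) (r r' : R), r ∈ 𝒜 i → r' ∈ 𝒜 j →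
      r * r' = ((-1 : ℚ) ^ (i * j)) • (r' * r))
    (dR : R →ₗ[ℚ] R)
    (hdR_deg : ∀ (i : ℤ), ∀ r ∈ 𝒜 i, dR r ∈ 𝒜 (i + 1))
    (hdR_sq : ∀ r : R, dR (dR r) = 0)
    (hleibR : ∀ (i : ℤ) (r r' : R), r ∈ 𝒜 i →
      dR (r * r') = dR r * r' + ((-1 : ℚ) ^ i) • (r * dR r'))
    [AddCommGroup Q] [Module ℚ Q] [Module R Q] [IsScalarTower ℚ R Q]
    (𝒬 : ℤ → Submodule ℚ Q) [DirectSum.Decomposition 𝒬]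
    (hsmul_deg : ∀ (i j : ℤ) (r : R) (q : Q), r ∈ 𝒜 i → q ∈ 𝒬 j → r • q ∈ 𝒬 (i + j))
    (dQ : Q →ₗ[ℚ] Q)
    (hdQ_deg : ∀ (i : ℤ), ∀ q ∈ 𝒬 i, dQ q ∈ 𝒬 (i + 1))
    (hdQ_sq : ∀ q : Q, dQ (dQ q) = 0)
    (hleibQ : ∀ (i : ℤ) (r : R) (q : Q), r ∈ 𝒜 i →
      dQ (r • q) = dR r • q + ((-1 : ℚ) ^ i) • (r • dQ q))
    (f : Q →ₗ[R] R)
    (hf_deg : ∀ (i : ℤ), ∀ q ∈ 𝒬 i, f q ∈ 𝒜 i)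
    (hf_chain : ∀ q : Q, dR (f q) = f (dQ q))
    (hcase : Function.Injective f ∨
      ∃ p : ℕ, ∀ i : ℤ, (i < (p : ℤ) ∨ 2 * (p : ℤ) ≤ i) → 𝒬 i = ⊥) :
    ∃ mu : R × Q → R × Q → R × Q,
      -- `ℚ`-bilinearity
      (∀ u v w, mu (u + v) w = mu u w + mu v w) ∧
      (∀ u v w, mu u (v + w) = mu u v + mu u w) ∧
      (∀ (c : ℚ) u v, mu (c • u) v = c • mu u v) ∧
      (∀ (c : ℚ) u v, mu u (c • v) = c • mu u v) ∧
      -- the semi-trivial product formulas on homogeneous elements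
      (∀ r r' : R, mu (r, 0) (r', 0) = (r * r', 0)) ∧
      (∀ (i : ℤ) (r : R) (q' : Q), r ∈ 𝒜 i →
        mu (r, 0) ((0 : R), q') = (0, ((-1 : ℚ) ^ i) • (r • q'))) ∧
      (∀ (i j : ℤ) (q : Q) (r' : R), q ∈ 𝒬 j → r' ∈ 𝒜 i →
        mu ((0 : R), q) (r', 0) = (0, ((-1 : ℚ) ^ (i * j)) • (r' • q))) ∧
      (∀ q q' : Q, mu ((0 : R), q) ((0 : R), q') = 0) ∧
      -- unit
      (∀ u, mu ((1 : R), (0 : Q)) u = u ∧ mu u ((1 : R), (0 : Q)) = u) ∧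
      -- associativity
      (∀ u v w, mu (mu u v) w = mu u (mu v w)) ∧
      -- graded commutativity (for the cone grading)
      (∀ (i j : ℤ) (r r' : R) (q q' : Q),
        r ∈ 𝒜 i → q ∈ 𝒬 (i + 1) → r' ∈ 𝒜 j → q' ∈ 𝒬 (j + 1) →
        mu (r, q) (r', q') = ((-1 : ℚ) ^ (i * j)) • mu (r', q') (r, q)) ∧
      -- Leibniz rule for the mapping cone differential
      (∀ (i : ℤ) (r : R) (q : Q) (v : R × Q), r ∈ 𝒜 i → q ∈ 𝒬 (i + 1) →
        coneDifferential dR dQ f (mu (r, q) v) =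
          mu (coneDifferential dR dQ f (r, q)) v +
            ((-1 : ℚ) ^ i) • mu (r, q) (coneDifferential dR dQ f v)) ∧
      -- the mapping cone differential squares to zero
      (∀ u, coneDifferential dR dQ f (coneDifferential dR dQ f u) = 0) := by
  have : SetLike.GradedSMul 𝒜 𝒬 := ⟨fun i j _ _ => hsmul_deg i j _ _⟩
  have hgc : IsGradedCommutative 𝒜 := fun i j r r' => hcomm i j r r'
  have hswap : ∀ q q', f q • q' = rightSMul 𝒜 𝒬 q (f q') := by
    rcases hcase with hinj | ⟨p, hp⟩
    · exact map_smul_eq_rightSMul_of_injective hgc hf_deg hinj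
    · exact map_smul_eq_rightSMul_of_concentrated hf_deg hp
  refine ⟨fun u v => coneMul 𝒜 𝒬 u v, LinearMap.map_add₂ _, fun u => map_add _,
    LinearMap.map_smul₂ _, fun _ u => map_smul _ _, fun r r' => ?_, fun i r q' hr => ?_,
    fun i j q r' hq hr' => ?_, fun q q' => ?_, fun u => ⟨one_coneMul u, coneMul_one u⟩,
    coneMul_assoc hgc, fun i j r r' q q' => coneMul_comm_of_mem hgc,
    fun i r q v hr hq => coneDifferential_coneMul hgc dR dQ f hdR_deg hleibR hdQ_deg hleibQ
      hf_deg hswap hr hq v,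
    coneDifferential_coneDifferential hdR_sq hdQ_sq hf_chain⟩
  · simp [coneMul_apply]
  · simp [coneMul_apply, gradeInvolution_of_mem hr, smul_assoc]
  · simp [coneMul_apply, rightSMul_of_mem hr' hq]
  · simp [coneMul_apply]

/-- **The semi-trivial CDGA structure on a mapping cone** (Proposition 3.17 of the paper).

Let `R` be a CDGA over `ℚ` (a `ℚ`-algebra with a grading `𝒜 : ℤ → Submodule ℚ R`
concentrated in non-negative degrees, graded commutative, with a degree `+1`
differential `dR` squaring to zero and satisfying the Leibniz rule), let `Q` be a
differential graded `R`-module (grading `𝒬 : ℤ → Submodule ℚ Q`, differential `dQ`),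
and let `f : Q → R` be a morphism of differential graded `R`-modules of degree `0`.

Suppose either (1) `f` is injective (so that `f` identifies `Q` with a differential
ideal of `R`, with the `R`-module structure on `Q` given by multiplication in `R`), or
(2) there is `p ∈ ℕ` with `Qⁱ = 0` for `i < p` and for `i ≥ 2p`.

Then the semi-trivial product together with the mapping cone differential makes the
mapping cone `R ⊕_f sQ` (carrier `R × Q`, with `(r, q)` denoting `r + sq` and
homogeneous of cone degree `n` when `r ∈ 𝒜 n`, `q ∈ 𝒬 (n+1)`) a CDGA:  there is a
`ℚ`-bilinear product given on homogeneous elements by the semi-trivial formulas which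
is associative, unital, graded commutative, and satisfies the Leibniz rule with respect
to the mapping cone differential (which squares to zero). -/
theorem semiTrivial_cdga_structure_on_mapping_cone
    {R Q : Type} [Ring R] [Algebra ℚ R]
    (𝒜 : ℤ → Submodule ℚ R) [GradedRing 𝒜]
    (hconn : ∀ i : ℤ, i < 0 → 𝒜 i = ⊥)
    (hcomm : ∀ (i j : ℤ) (r r' : R), r ∈ 𝒜 i → r' ∈ 𝒜 j →
      r * r' = ((-1 : ℚ) ^ (i * j)) • (r' * r))
    (dR : R →ₗ[ℚ] R)
    (hdR_deg : ∀ (i : ℤ), ∀ r ∈ 𝒜 i, dR r ∈ 𝒜 (i + 1))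
    (hdR_sq : ∀ r : R, dR (dR r) = 0)
    (hleibR : ∀ (i : ℤ) (r r' : R), r ∈ 𝒜 i →
      dR (r * r') = dR r * r' + ((-1 : ℚ) ^ i) • (r * dR r'))
    [AddCommGroup Q] [Module ℚ Q] [Module R Q] [IsScalarTower ℚ R Q]
    (𝒬 : ℤ → Submodule ℚ Q) [DirectSum.Decomposition 𝒬]
    (hsmul_deg : ∀ (i j : ℤ) (r : R) (q : Q), r ∈ 𝒜 i → q ∈ 𝒬 j → r • q ∈ 𝒬 (i + j))
    (dQ : Q →ₗ[ℚ] Q)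
    (hdQ_deg : ∀ (i : ℤ), ∀ q ∈ 𝒬 i, dQ q ∈ 𝒬 (i + 1))
    (hdQ_sq : ∀ q : Q, dQ (dQ q) = 0)
    (hleibQ : ∀ (i : ℤ) (r : R) (q : Q), r ∈ 𝒜 i →
      dQ (r • q) = dR r • q + ((-1 : ℚ) ^ i) • (r • dQ q))
    (f : Q →ₗ[R] R)
    (hf_deg : ∀ (i : ℤ), ∀ q ∈ 𝒬 i, f q ∈ 𝒜 i)
    (hf_chain : ∀ q : Q, dR (f q) = f (dQ q))
    (hcase : Function.Injective f ∨
      ∃ p : ℕ, ∀ i : ℤ, (i < (p : ℤ) ∨ 2 * (p : ℤ) ≤ i) → 𝒬 i = ⊥) :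
    ∃ mu : R × Q → R × Q → R × Q,
      -- `ℚ`-bilinearity
      (∀ u v w, mu (u + v) w = mu u w + mu v w) ∧
      (∀ u v w, mu u (v + w) = mu u v + mu u w) ∧
      (∀ (c : ℚ) u v, mu (c • u) v = c • mu u v) ∧
      (∀ (c : ℚ) u v, mu u (c • v) = c • mu u v) ∧
      -- the semi-trivial product formulas on homogeneous elements
      (∀ r r' : R, mu (r, 0) (r', 0) = (r * r', 0)) ∧
      (∀ (i : ℤ) (r : R) (q' : Q), r ∈ 𝒜 i →
        mu (r, 0) ((0 : R), q') = (0, ((-1 : ℚ) ^ i) • (r • q'))) ∧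
      (∀ (i j : ℤ) (q : Q) (r' : R), q ∈ 𝒬 j → r' ∈ 𝒜 i →
        mu ((0 : R), q) (r', 0) = (0, ((-1 : ℚ) ^ (i * j)) • (r' • q))) ∧
      (∀ q q' : Q, mu ((0 : R), q) ((0 : R), q') = 0) ∧
      -- unit
      (∀ u, mu ((1 : R), (0 : Q)) u = u ∧ mu u ((1 : R), (0 : Q)) = u) ∧
      -- associativity
      (∀ u v w, mu (mu u v) w = mu u (mu v w)) ∧
      -- graded commutativity (for the cone grading)
      (∀ (i j : ℤ) (r r' : R) (q q' : Q),
        r ∈ 𝒜 i → q ∈ 𝒬 (i + 1) → r' ∈ 𝒜 j → q' ∈ 𝒬 (j + 1) →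
        mu (r, q) (r', q') = ((-1 : ℚ) ^ (i * j)) • mu (r', q') (r, q)) ∧
      -- Leibniz rule for the mapping cone differential
      (∀ (i : ℤ) (r : R) (q : Q) (v : R × Q), r ∈ 𝒜 i → q ∈ 𝒬 (i + 1) →
        coneDifferential dR dQ f (mu (r, q) v) =
          mu (coneDifferential dR dQ f (r, q)) v +
            ((-1 : ℚ) ^ i) • mu (r, q) (coneDifferential dR dQ f v)) ∧
      -- the mapping cone differential squares to zero
      (∀ u, coneDifferential dR dQ f (coneDifferential dR dQ f u) = 0) :=
  semiTrivial_cdga_structure_on_mapping_cone_general 𝒜 hcomm dR hdR_deg hdR_sq hleibR 𝒬 hsmul_deg dQ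
    hdQ_deg hdQ_sq hleibQ f hf_deg hf_chain hcase
end

section
/- Let 𝒞 be a (Quillen) model category, let Â be a cofibrant object, and let B, B′, B̂ be objects. Let f : Â → B, f′ : Â → B′, f̄ : Â → B̂, β : B̂ → B and β′ : B̂ → B′ be morphisms such that the induced morphism (β, β′) : B̂ → B × B′ is a fibration, and such that the morphism (β∘f̄, β′∘f̄) : Â → B × B′ is left homotopic to (f, f′) : Â → B × B′. Then there exists a morphism f̂ : Â → B̂ such that f̂ is left homotopic to f̄, β∘f̂ = f and β′∘f̂ = f′. -/
/-!
Since `Ahat` is cofibrant, the first end `i₀ : Ahat ⟶ Cyl` of any cylinder is an acyclic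
cofibration: it is `coprod.inl` followed by the cofibration `(i₀, i₁)`, and `coprod.inl` is a
cofibration because `Ahat` is. Hence the homotopy `H : Cyl ⟶ B ⨯ B'` from `fbar ≫ (β, β')` to
`(f, f')` lifts through the fibration `(β, β')` to some `K` with `i₀ ≫ K = fbar`, and
`fhat := i₁ ≫ K` is left homotopic to `fbar` (through `K`) and lies strictly over `(f, f')`.
-/

open CategoryTheory CategoryTheory.Limits

universe v u

/-- A morphism `g` is a retract of a morphism `f` (in the arrow category). -/
def IsRetractOfMap {C : Type u} [Category.{v} C] {A B X Y : C}
    (g : A ⟶ B) (f : X ⟶ Y) : Prop :=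
  ∃ (iA : A ⟶ X) (rA : X ⟶ A) (iB : B ⟶ Y) (rB : Y ⟶ B),
    iA ≫ rA = 𝟙 A ∧ iB ≫ rB = 𝟙 B ∧ iA ≫ f = g ≫ iB ∧ rA ≫ g = f ≫ rB

/-- A (Quillen) model category: a complete and cocomplete category together with three
classes of morphisms — weak equivalences, cofibrations and fibrations — satisfying
Quillen's axioms: two-out-of-three for weak equivalences, closure of all three classes
under retracts, the lifting axiom for (acyclic cofibration, fibration) and
(cofibration, acyclic fibration) pairs, and the two factorization axioms. -/
class ModelCategory (C : Type u) [Category.{v} C] [HasLimits C] [HasColimits C] where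
  weq : MorphismProperty C
  cof : MorphismProperty C
  fib : MorphismProperty C
  weq_comp : ∀ {X Y Z : C} (f : X ⟶ Y) (g : Y ⟶ Z), weq f → weq g → weq (f ≫ g)
  weq_of_comp_left : ∀ {X Y Z : C} (f : X ⟶ Y) (g : Y ⟶ Z), weq f → weq (f ≫ g) → weq g
  weq_of_comp_right : ∀ {X Y Z : C} (f : X ⟶ Y) (g : Y ⟶ Z), weq g → weq (f ≫ g) → weq f
  weq_retract : ∀ {A B X Y : C} (g : A ⟶ B) (f : X ⟶ Y),
    IsRetractOfMap g f → weq f → weq g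
  cof_retract : ∀ {A B X Y : C} (g : A ⟶ B) (f : X ⟶ Y),
    IsRetractOfMap g f → cof f → cof g
  fib_retract : ∀ {A B X Y : C} (g : A ⟶ B) (f : X ⟶ Y),
    IsRetractOfMap g f → fib f → fib g
  lifting_acyclic_cof : ∀ {A B X Y : C} (i : A ⟶ B) (p : X ⟶ Y),
    cof i → weq i → fib p → HasLiftingProperty i p
  lifting_acyclic_fib : ∀ {A B X Y : C} (i : A ⟶ B) (p : X ⟶ Y),
    cof i → fib p → weq p → HasLiftingProperty i p
  factor_cof_acyclicFib : ∀ {X Y : C} (f : X ⟶ Y),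
    ∃ (Z : C) (g : X ⟶ Z) (h : Z ⟶ Y), cof g ∧ fib h ∧ weq h ∧ g ≫ h = f
  factor_acyclicCof_fib : ∀ {X Y : C} (f : X ⟶ Y),
    ∃ (Z : C) (g : X ⟶ Z) (h : Z ⟶ Y), cof g ∧ weq g ∧ fib h ∧ g ≫ h = f

/-- An object is cofibrant if the unique map from the initial object is a cofibration. -/
def Cofibrant {C : Type u} [Category.{v} C] [HasLimits C] [HasColimits C]
    [ModelCategory C] (A : C) : Prop :=
  ModelCategory.cof (initial.to A)

/-- Two morphisms `f₀, f₁ : A ⟶ X` are left homotopic if there is a cylinder object for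
`A` — a factorization of the fold map `A ⊔ A → A` as a cofibration `(i₀, i₁)` followed
by a weak equivalence `p` — and a morphism `H : Cyl(A) ⟶ X` with `i₀ ≫ H = f₀` and
`i₁ ≫ H = f₁`. -/
def LeftHomotopic {C : Type u} [Category.{v} C] [HasLimits C] [HasColimits C]
    [ModelCategory C] {A X : C} (f₀ f₁ : A ⟶ X) : Prop :=
  ∃ (Z : C) (i₀ i₁ : A ⟶ Z) (p : Z ⟶ A),
    ModelCategory.cof (coprod.desc i₀ i₁) ∧ ModelCategory.weq p ∧
    i₀ ≫ p = 𝟙 A ∧ i₁ ≫ p = 𝟙 A ∧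
    ∃ H : Z ⟶ X, i₀ ≫ H = f₀ ∧ i₁ ≫ H = f₁

namespace ModelCategory

variable {C : Type u} [Category.{v} C] [HasLimits C] [HasColimits C] [ModelCategory C]

theorem weq_id (X : C) : weq (𝟙 X) := by
  obtain ⟨Z, g, h, -, hg, -, hgh⟩ := factor_acyclicCof_fib (𝟙 X)
  exact weq_retract _ g ⟨𝟙 X, 𝟙 X, g, h, by simp, hgh, by simp, by simp [hgh]⟩ hg

/-- The retract argument: a map with the left lifting property against all acyclic
fibrations is a retract of the cofibration in its (cofibration, acyclic fibration)
factorization. -/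
theorem cof_of_hasLiftingProperty {A B : C} (i : A ⟶ B)
    (hi : ∀ {X Y : C} (p : X ⟶ Y), fib p → weq p → HasLiftingProperty i p) : cof i := by
  obtain ⟨Z, c, q, hc, hq, hwq, rfl⟩ := factor_cof_acyclicFib i
  have := hi q hq hwq
  have sq : CommSq c (c ≫ q) q (𝟙 B) := ⟨by simp⟩
  exact cof_retract _ c ⟨𝟙 A, 𝟙 A, sq.lift, q, by simp, sq.fac_right, by simp, by simp⟩ hc

theorem cof_comp {X Y Z : C} {f : X ⟶ Y} {g : Y ⟶ Z} (hf : cof f) (hg : cof g) :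
    cof (f ≫ g) :=
  cof_of_hasLiftingProperty _ fun p hp hwp =>
    have := lifting_acyclic_fib f p hf hp hwp
    have := lifting_acyclic_fib g p hg hp hwp
    inferInstance

theorem cof_of_isIso {X Y : C} (f : X ⟶ Y) [IsIso f] : cof f :=
  cof_of_hasLiftingProperty f fun _ _ _ => inferInstance

/-- The lift is glued from the top map on `A` and a lift on `A'`, which exists since `A'` is
cofibrant. -/
theorem cof_coprod_inl {A A' : C} (hA' : Cofibrant A') : cof (coprod.inl : A ⟶ A ⨿ A') :=
  cof_of_hasLiftingProperty _ fun p hp hwp => ⟨fun {u v} sq => by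
    have := lifting_acyclic_fib _ p hA' hp hwp
    have sq' : CommSq (initial.to _) (initial.to A') p (coprod.inr ≫ v) :=
      ⟨Subsingleton.elim _ _⟩
    exact ⟨⟨{ l := coprod.desc u sq'.lift
              fac_left := coprod.inl_desc _ _
              fac_right := by
                ext
                · simp only [coprod.inl_desc_assoc, sq.w]
                · simp only [coprod.inr_desc_assoc, sq'.fac_right] }⟩⟩⟩

end ModelCategory

open ModelCategory

section

variable {C : Type u} [Category.{v} C] [HasLimits C] [HasColimits C] [ModelCategory C]

theorem LeftHomotopic.symm {A X : C} {f₀ f₁ : A ⟶ X} (h : LeftHomotopic f₀ f₁) :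
    LeftHomotopic f₁ f₀ := by
  obtain ⟨Z, i₀, i₁, p, hcof, hweq, hi₀, hi₁, H, hH₀, hH₁⟩ := h
  have hswap : coprod.desc i₁ i₀ = (coprod.braiding A A).hom ≫ coprod.desc i₀ i₁ := by
    ext <;> simp only [coprod.braiding_hom, coprod.inl_desc, coprod.inr_desc,
      coprod.inl_desc_assoc, coprod.inr_desc_assoc]
  refine ⟨Z, i₁, i₀, p, ?_, hweq, hi₁, hi₀, H, hH₁, hH₀⟩
  rw [hswap]
  exact cof_comp (cof_of_isIso _) hcof

theorem cof_and_weq_of_cylinder_of_cofibrant {A Z : C} (hA : Cofibrant A) {i₀ i₁ : A ⟶ Z}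
    {p : Z ⟶ A} (hcof : cof (coprod.desc i₀ i₁)) (hweq : weq p) (hi₀ : i₀ ≫ p = 𝟙 A) :
    cof i₀ ∧ weq i₀ := by
  refine ⟨?_, weq_of_comp_right i₀ p hweq (hi₀ ▸ weq_id A)⟩
  simpa only [coprod.inl_desc] using cof_comp (cof_coprod_inl hA) hcof

theorem exists_leftHomotopic_lift_of_fib {A E Y : C} (hA : Cofibrant A) {q : E ⟶ Y}
    (hq : fib q) {g : A ⟶ E} {f : A ⟶ Y} (h : LeftHomotopic (g ≫ q) f) :
    ∃ g' : A ⟶ E, LeftHomotopic g' g ∧ g' ≫ q = f := by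
  obtain ⟨Z, i₀, i₁, p, hcof, hweq, hi₀, hi₁, H, hH₀, hH₁⟩ := h
  obtain ⟨hcof₀, hweq₀⟩ := cof_and_weq_of_cylinder_of_cofibrant hA hcof hweq hi₀
  have := lifting_acyclic_cof i₀ q hcof₀ hweq₀ hq
  have sq : CommSq g i₀ q H := ⟨hH₀.symm⟩
  refine ⟨i₁ ≫ sq.lift, LeftHomotopic.symm ⟨Z, i₀, i₁, p, hcof, hweq, hi₀, hi₁, sq.lift,
    sq.fac_left, rfl⟩, by rw [Category.assoc, sq.fac_right, hH₁]⟩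

end

/-- **Strictifying a homotopy commutative triangle** (Lemma 3.6 of the paper).

Let `Ahat` be a cofibrant object of a model category, and let `f : Ahat ⟶ B`,
`f' : Ahat ⟶ B'`, `fbar : Ahat ⟶ Bhat`, `β : Bhat ⟶ B`, `β' : Bhat ⟶ B'` be morphisms
such that `(β, β') : Bhat ⟶ B × B'` is a fibration and `(β ∘ fbar, β' ∘ fbar)` is left
homotopic to `(f, f') : Ahat ⟶ B × B'`.  Then there is `fhat : Ahat ⟶ Bhat` left
homotopic to `fbar` with `β ∘ fhat = f` and `β' ∘ fhat = f'`. -/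
theorem exists_strict_lift_of_homotopy_commutative
    {C : Type u} [Category.{v} C] [HasLimits C] [HasColimits C] [ModelCategory C]
    {Ahat B B' Bhat : C} (hA : Cofibrant Ahat)
    (f : Ahat ⟶ B) (f' : Ahat ⟶ B') (fbar : Ahat ⟶ Bhat)
    (β : Bhat ⟶ B) (β' : Bhat ⟶ B')
    (hfib : ModelCategory.fib (prod.lift β β'))
    (hhtpy : LeftHomotopic (prod.lift (fbar ≫ β) (fbar ≫ β')) (prod.lift f f')) :
    ∃ fhat : Ahat ⟶ Bhat, LeftHomotopic fhat fbar ∧ fhat ≫ β = f ∧ fhat ≫ β' = f' := by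
  rw [← prod.comp_lift] at hhtpy
  obtain ⟨fhat, hhom, hlift⟩ := exists_leftHomotopic_lift_of_fib hA hfib hhtpy
  refine ⟨fhat, hhom, ?_, ?_⟩
  · simpa only [Category.assoc, prod.lift_fst] using hlift =≫ prod.fst
  · simpa only [Category.assoc, prod.lift_snd] using hlift =≫ prod.snd
end

section
/- Let 𝒞 be a model category. Suppose given a commutative square consisting of morphisms f : A → B, i : A → C, u : C → D and p : B → D with p∘f = u∘i, where i is a cofibration and p is both a fibration and a weak equivalence. If ℓ, ℓ′ : C → B are two lifts in this square (i.e., ℓ∘i = f = ℓ′∘i and p∘ℓ = u = p∘ℓ′), then ℓ and ℓ′ are left homotopic. -/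
open CategoryTheory CategoryTheory.Limits

universe v u

/-! Two lifts agree after composing with the acyclic fibration `p`, and that alone makes them
left homotopic: for any cylinder `Z ⨿ Z ⟶ Cyl ⟶ Z`, the square with top `(ℓ, ℓ')`, left the
cofibration `Z ⨿ Z ⟶ Cyl`, right `p` and bottom `Cyl ⟶ Z ⟶ D` commutes, and a lift in it is
the homotopy. -/

namespace ModelCategory

variable {C : Type u} [Category.{v} C] [HasLimits C] [HasColimits C] [ModelCategory C]

theorem leftHomotopic_of_comp_eq_coprodDesc {X Y Cyl : C} (j : X ⨿ X ⟶ Cyl) (q : Cyl ⟶ X)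
    (hj : cof j) (hq : weq q) (hjq : j ≫ q = codiag X) {f₀ f₁ : X ⟶ Y} (H : Cyl ⟶ Y)
    (hH : j ≫ H = coprod.desc f₀ f₁) : LeftHomotopic f₀ f₁ := by
  have hj_eq : coprod.desc (coprod.inl ≫ j) (coprod.inr ≫ j) = j := by
    rw [← coprod.desc_comp, coprod.desc_inl_inr, Category.id_comp]
  refine ⟨Cyl, coprod.inl ≫ j, coprod.inr ≫ j, q, by rwa [hj_eq], hq, ?_, ?_, H, ?_, ?_⟩
  · rw [Category.assoc, hjq, coprod.inl_desc]
  · rw [Category.assoc, hjq, coprod.inr_desc]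
  · rw [Category.assoc, hH, coprod.inl_desc]
  · rw [Category.assoc, hH, coprod.inr_desc]

theorem leftHomotopic_of_comp_eq_comp {X B D : C} (p : B ⟶ D) (hfib : fib p) (hweq : weq p)
    {ℓ ℓ' : X ⟶ B} (h : ℓ ≫ p = ℓ' ≫ p) : LeftHomotopic ℓ ℓ' := by
  obtain ⟨Cyl, j, q, hj, -, hq, hjq⟩ := factor_cof_acyclicFib (codiag X)
  have sq : CommSq (coprod.desc ℓ ℓ') j p (q ≫ ℓ ≫ p) :=
    ⟨by ext <;> simp [← Category.assoc, hjq, h]⟩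
  have := lifting_acyclic_fib j p hj hfib hweq
  exact leftHomotopic_of_comp_eq_coprodDesc j q hj hq hjq sq.lift sq.fac_left

end ModelCategory

theorem lifts_leftHomotopic_general
    {C : Type u} [Category.{v} C] [HasLimits C] [HasColimits C] [ModelCategory C]
    {B Z D : C} (u : Z ⟶ D) (p : B ⟶ D)
    (hfib : ModelCategory.fib p)
    (hweq : ModelCategory.weq p)
    (ℓ ℓ' : Z ⟶ B)
    (hℓ₂ : ℓ ≫ p = u)
    (hℓ'₂ : ℓ' ≫ p = u) :
    LeftHomotopic ℓ ℓ' :=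
  ModelCategory.leftHomotopic_of_comp_eq_comp p hfib hweq (hℓ₂.trans hℓ'₂.symm)

/-- **Uniqueness of lifts up to homotopy** (the 'moreover' clause of Lemma 3.5 of the
paper, in the acyclic fibration case).

In a model category, given a commutative square `p ∘ f = u ∘ i` with `f : A ⟶ B`,
`i : A ⟶ Z`, `u : Z ⟶ D`, `p : B ⟶ D`, where `i` is a cofibration and `p` is both a
fibration and a weak equivalence, any two lifts `ℓ, ℓ' : Z ⟶ B` in the square
(`ℓ ∘ i = f = ℓ' ∘ i` and `p ∘ ℓ = u = p ∘ ℓ'`) are left homotopic. -/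
theorem lifts_leftHomotopic
    {C : Type u} [Category.{v} C] [HasLimits C] [HasColimits C] [ModelCategory C]
    {A B Z D : C} (f : A ⟶ B) (i : A ⟶ Z) (u : Z ⟶ D) (p : B ⟶ D)
    (hsq : f ≫ p = i ≫ u)
    (hcof : ModelCategory.cof i) (hfib : ModelCategory.fib p)
    (hweq : ModelCategory.weq p)
    (ℓ ℓ' : Z ⟶ B)
    (hℓ₁ : i ≫ ℓ = f) (hℓ₂ : ℓ ≫ p = u)
    (hℓ'₁ : i ≫ ℓ' = f) (hℓ'₂ : ℓ' ≫ p = u) :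
    LeftHomotopic ℓ ℓ' :=
  lifts_leftHomotopic_general u p hfib hweq ℓ ℓ' hℓ₂ hℓ'₂
end
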